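/- arXiv:1807.06585 — 3 statements merged into one kernel-verified Lean document; each statement's English description precedes it below -/
import Mathlib

section
/- There exists a constant C > 0 such that for every Schwartz function u : ℝ⁴ → ℝ that is radially symmetric, one has |x|·|u(x)| ≤ C‖u‖_{Ḣ¹(ℝ⁴)} for all x ∈ ℝ⁴, where ‖u‖_{Ḣ¹} = ‖∇u‖_{L²(ℝ⁴)}. -/
open MeasureTheory Set Filter Topology
open scoped SchwartzMap

/-!
Let `u` be radial on an `n`-dimensional space, `n ≥ 3`, `r = ‖x‖` and `e` a unit vector.
Along the ray, `u (r • e) = -∫_r^∞ ∂ₛ u (s • e) ds`, and Cauchy–Schwarz with the weights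
`s ^ ((n-1)/2)` and `s ^ (-(n-1)/2)` gives
`r ^ (n-2) ‖u x‖² ≤ (n-2)⁻¹ ∫_0^∞ s ^ (n-1) ‖Du (s • e)‖² ds`.
Since `‖Du‖` is radial as well (a reflection carries any point to any other of the same norm
and preserves `u`), polar coordinates identify the right-hand side with
`‖Du‖²_{L²} / (n (n-2) |B₁|)`. For `n = 4` this reads `(‖x‖ |u x|)² ≤ ‖Du‖²_{L²} / (8 |B₁|)`.
-/

section Radial

variable {E F : Type*} [NormedAddCommGroup E] [InnerProductSpace ℝ E]
  [NormedAddCommGroup F] [NormedSpace ℝ F]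

theorem norm_fderiv_eq_of_radial {u : E → F} (hrad : ∀ x y : E, ‖x‖ = ‖y‖ → u x = u y)
    {a b : E} (hab : ‖a‖ = ‖b‖) : ‖fderiv ℝ u a‖ = ‖fderiv ℝ u b‖ := by
  set A := Submodule.reflection (ℝ ∙ (a - b))ᗮ
  have hAa : A a = b := Submodule.reflection_sub hab
  have hu : u ∘ A.toContinuousLinearEquiv = u := funext fun z ↦ hrad _ _ (A.norm_map z)
  have hD : fderiv ℝ u a = (fderiv ℝ u b).comp (A : E →L[ℝ] E) := by
    have h := A.toContinuousLinearEquiv.comp_right_fderiv (f := u) (x := a)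
    rw [hu] at h
    exact h.trans (by rw [LinearIsometryEquiv.coe_toContinuousLinearEquiv, hAa])
  rw [hD, ContinuousLinearMap.opNorm_comp_linearIsometryEquiv]

theorem apply_eq_apply_norm_smul_of_radial {α : Type*} {h : E → α}
    (hrad : ∀ x y : E, ‖x‖ = ‖y‖ → h x = h y) {e : E} (he : ‖e‖ = 1) (y : E) : h y = h (‖y‖ • e) :=
  hrad _ _ (by rw [norm_smul, he, mul_one, norm_norm])

variable [FiniteDimensional ℝ E] [MeasurableSpace E] [BorelSpace E] [Nontrivial E]
  (μ : Measure E) [μ.IsAddHaarMeasure]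

theorem integrable_iff_of_radial {h : E → F} (hrad : ∀ x y : E, ‖x‖ = ‖y‖ → h x = h y)
    {e : E} (he : ‖e‖ = 1) :
    Integrable h μ ↔
      IntegrableOn (fun s : ℝ ↦ s ^ (Module.finrank ℝ E - 1) • h (s • e)) (Ioi 0) := by
  rw [← integrable_fun_norm_addHaar μ, ← funext (apply_eq_apply_norm_smul_of_radial hrad he)]

theorem integral_eq_of_radial {h : E → F} (hrad : ∀ x y : E, ‖x‖ = ‖y‖ → h x = h y)
    {e : E} (he : ‖e‖ = 1) :
    ∫ y, h y ∂μ = Module.finrank ℝ E • μ.real (Metric.ball 0 1) •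
      ∫ s in Ioi (0 : ℝ), s ^ (Module.finrank ℝ E - 1) • h (s • e) := by
  rw [← integral_fun_norm_addHaar μ, ← funext (apply_eq_apply_norm_smul_of_radial hrad he)]

end Radial

theorem norm_le_setIntegral_Ioi_of_hasDerivAt {F : Type*} [NormedAddCommGroup F]
    [NormedSpace ℝ F] [CompleteSpace F] {f f' : ℝ → F} {g : ℝ → ℝ} {a : ℝ}
    (hderiv : ∀ x ∈ Ici a, HasDerivAt f (f' x) x) (hbound : ∀ x ∈ Ioi a, ‖f' x‖ ≤ g x)
    (hg : IntegrableOn g (Ioi a)) (hf : Tendsto f atTop (𝓝 0)) :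
    ‖f a‖ ≤ ∫ x in Ioi a, g x := by
  have hf'_meas : AEStronglyMeasurable f' (volume.restrict (Ioi a)) := by
    refine (stronglyMeasurable_deriv f).aestronglyMeasurable.congr ?_
    filter_upwards [ae_restrict_mem measurableSet_Ioi] with x hx
    exact (hderiv x (mem_Ici_of_Ioi hx)).deriv
  have hbound_ae : ∀ᵐ x ∂volume.restrict (Ioi a), ‖f' x‖ ≤ g x :=
    (ae_restrict_iff' measurableSet_Ioi).2 (ae_of_all _ hbound)
  have hFTC := integral_Ioi_of_hasDerivAt_of_tendsto' hderiv (hg.mono' hf'_meas hbound_ae) hf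
  rw [← norm_neg, ← zero_sub, ← hFTC]
  exact norm_integral_le_of_norm_le hg hbound_ae

theorem sq_integral_mul_le_integral_sq_mul_integral_sq {α : Type*} [MeasurableSpace α]
    {μ : Measure α} {φ ψ : α → ℝ} (hφ0 : 0 ≤ᵐ[μ] φ) (hψ0 : 0 ≤ᵐ[μ] ψ)
    (hφ : MemLp φ 2 μ) (hψ : MemLp ψ 2 μ) :
    (∫ a, φ a * ψ a ∂μ) ^ 2 ≤ (∫ a, φ a ^ 2 ∂μ) * ∫ a, ψ a ^ 2 ∂μ := by
  have h := integral_mul_le_Lp_mul_Lq_of_nonneg Real.HolderConjugate.two_two hφ0 hψ0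
    (by simpa using hφ) (by simpa using hψ)
  simp only [Real.rpow_two, ← Real.sqrt_eq_rpow] at h
  have hint_nonneg : 0 ≤ ∫ a, φ a * ψ a ∂μ :=
    integral_nonneg_of_ae (by filter_upwards [hφ0, hψ0] with a h1 h2 using mul_nonneg h1 h2)
  calc (∫ a, φ a * ψ a ∂μ) ^ 2
      ≤ (√(∫ a, φ a ^ 2 ∂μ) * √(∫ a, ψ a ^ 2 ∂μ)) ^ 2 := by gcongr
    _ = (∫ a, φ a ^ 2 ∂μ) * ∫ a, ψ a ^ 2 ∂μ := by
      rw [mul_pow, Real.sq_sqrt (integral_nonneg fun a ↦ sq_nonneg _),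
        Real.sq_sqrt (integral_nonneg fun a ↦ sq_nonneg _)]

section WeightedHalfLine

variable {k r : ℝ} {g : ℝ → ℝ}

theorem sq_rpow_div_two {s : ℝ} (hs : 0 ≤ s) (a : ℝ) : (s ^ (a / 2)) ^ 2 = s ^ a := by
  rw [← Real.rpow_mul_natCast hs]
  norm_num

theorem memLp_two_rpow_half_mul (hr : 0 ≤ r)
    (hg : AEStronglyMeasurable g (volume.restrict (Ioi r)))
    (hint : IntegrableOn (fun s ↦ s ^ k * g s ^ 2) (Ioi r)) :
    MemLp (fun s ↦ s ^ (k / 2) * g s) 2 (volume.restrict (Ioi r)) := by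
  have hmeas := (measurable_id.pow_const (k / 2)).aestronglyMeasurable.mul hg
  refine (memLp_two_iff_integrable_sq hmeas).2 (hint.congr_fun (fun s hs ↦ ?_) measurableSet_Ioi)
  show s ^ k * g s ^ 2 = (s ^ (k / 2) * g s) ^ 2
  rw [mul_pow, sq_rpow_div_two (hr.trans hs.le)]

theorem memLp_two_rpow_neg_half (hk : 1 < k) (hr : 0 < r) :
    MemLp (fun s : ℝ ↦ s ^ (-k / 2)) 2 (volume.restrict (Ioi r)) := by
  refine (memLp_two_iff_integrable_sq (measurable_id.pow_const _).aestronglyMeasurable).2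
    ((integrableOn_Ioi_rpow_of_lt (by linarith : -k < -1) hr).congr_fun (fun s hs ↦ ?_)
      measurableSet_Ioi)
  exact (sq_rpow_div_two (hr.trans hs).le _).symm

theorem rpow_half_mul_mul_rpow_neg_half {s : ℝ} (hs : 0 < s) (y : ℝ) :
    s ^ (k / 2) * y * s ^ (-k / 2) = y := by
  rw [mul_right_comm, ← Real.rpow_add hs, show k / 2 + -k / 2 = 0 by ring, Real.rpow_zero,
    one_mul]

theorem integrableOn_Ioi_of_integrableOn_rpow_mul_sq (hk : 1 < k) (hr : 0 < r)
    (hg : AEStronglyMeasurable g (volume.restrict (Ioi r)))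
    (hint : IntegrableOn (fun s ↦ s ^ k * g s ^ 2) (Ioi r)) :
    IntegrableOn g (Ioi r) := by
  have h : IntegrableOn (fun s ↦ s ^ (k / 2) * g s * s ^ (-k / 2)) (Ioi r) :=
    (memLp_two_rpow_half_mul hr.le hg hint).integrable_mul (memLp_two_rpow_neg_half hk hr)
  exact h.congr_fun (fun s hs ↦ rpow_half_mul_mul_rpow_neg_half (hr.trans hs) (g s))
    measurableSet_Ioi

theorem rpow_mul_sq_setIntegral_Ioi_le (hk : 1 < k) (hr : 0 < r) (hg0 : ∀ s ∈ Ioi r, 0 ≤ g s)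
    (hg : AEStronglyMeasurable g (volume.restrict (Ioi r)))
    (hint : IntegrableOn (fun s ↦ s ^ k * g s ^ 2) (Ioi r)) :
    r ^ (k - 1) * (∫ s in Ioi r, g s) ^ 2 ≤ (∫ s in Ioi r, s ^ k * g s ^ 2) / (k - 1) := by
  have hφ : ∫ s in Ioi r, (s ^ (k / 2) * g s) ^ 2 = ∫ s in Ioi r, s ^ k * g s ^ 2 :=
    setIntegral_congr_fun measurableSet_Ioi fun s hs ↦ by
      rw [mul_pow, sq_rpow_div_two (hr.trans hs).le]
  have hψ : ∫ s in Ioi r, (s ^ (-k / 2)) ^ 2 = r ^ (1 - k) / (k - 1) := by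
    rw [setIntegral_congr_fun measurableSet_Ioi fun s hs ↦ sq_rpow_div_two (hr.trans hs).le _,
      integral_Ioi_rpow_of_lt (by linarith) hr, ← neg_div_neg_eq, neg_neg]
    ring_nf
  have hgφψ : ∫ s in Ioi r, g s = ∫ s in Ioi r, s ^ (k / 2) * g s * s ^ (-k / 2) :=
    setIntegral_congr_fun measurableSet_Ioi
      fun s hs ↦ (rpow_half_mul_mul_rpow_neg_half (hr.trans hs) (g s)).symm
  have hCS := sq_integral_mul_le_integral_sq_mul_integral_sq
    ((ae_restrict_iff' measurableSet_Ioi).2 (ae_of_all _ fun s hs ↦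
      mul_nonneg (Real.rpow_nonneg (hr.trans hs).le _) (hg0 s hs)))
    ((ae_restrict_iff' measurableSet_Ioi).2 (ae_of_all _ fun s hs ↦
      Real.rpow_nonneg (hr.trans hs).le _))
    (memLp_two_rpow_half_mul hr.le hg hint) (memLp_two_rpow_neg_half hk hr)
  rw [← hgφψ, hφ, hψ] at hCS
  have hr1 : r ^ (k - 1) * r ^ (1 - k) = 1 := by
    rw [← Real.rpow_add hr, sub_add_sub_cancel', sub_self, Real.rpow_zero]
  calc r ^ (k - 1) * (∫ s in Ioi r, g s) ^ 2
      ≤ r ^ (k - 1) * ((∫ s in Ioi r, s ^ k * g s ^ 2) * (r ^ (1 - k) / (k - 1))) := by gcongr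
    _ = (∫ s in Ioi r, s ^ k * g s ^ 2) / (k - 1) := by
      linear_combination (∫ s in Ioi r, s ^ k * g s ^ 2) / (k - 1) * hr1

end WeightedHalfLine

section SchwartzRay

variable {E F : Type*} [NormedAddCommGroup E] [NormedSpace ℝ E]
  [NormedAddCommGroup F] [NormedSpace ℝ F]

theorem SchwartzMap.integrable_sq_norm_fderiv [MeasurableSpace E] [BorelSpace E]
    [SecondCountableTopology E] (u : 𝓢(E, F)) (μ : Measure E) [μ.HasTemperateGrowth] :
    Integrable (fun y ↦ ‖fderiv ℝ u y‖ ^ 2) μ := by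
  simpa using ((SchwartzMap.fderivCLM ℝ E F u).memLp 2 μ).integrable_norm_pow two_ne_zero

theorem SchwartzMap.norm_le_setIntegral_norm_fderiv_smul [ProperSpace E] [CompleteSpace F]
    (u : 𝓢(E, F)) {e : E} (he : ‖e‖ = 1) (r : ℝ)
    (hint : IntegrableOn (fun s ↦ ‖fderiv ℝ u (s • e)‖) (Ioi r)) :
    ‖u (r • e)‖ ≤ ∫ s in Ioi r, ‖fderiv ℝ u (s • e)‖ := by
  have hderiv (s : ℝ) : HasDerivAt (fun t ↦ u (t • e)) (fderiv ℝ u (s • e) e) s :=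
    u.differentiableAt.hasFDerivAt.comp_hasDerivAt s
      (((hasDerivAt_id s).smul_const e).congr_deriv (one_smul _ _))
  have hbound (s : ℝ) : ‖fderiv ℝ u (s • e) e‖ ≤ ‖fderiv ℝ u (s • e)‖ := by
    simpa [he] using (fderiv ℝ u (s • e)).le_opNorm e
  have hray : Tendsto (fun t : ℝ ↦ t • e) atTop (cocompact E) := by
    refine (tendsto_norm_atTop_iff_cobounded.1 ?_).mono_right Metric.cobounded_le_cocompact
    simpa [norm_smul, he] using tendsto_abs_atTop_atTop
  exact norm_le_setIntegral_Ioi_of_hasDerivAt (fun s _ ↦ hderiv s) (fun s _ ↦ hbound s) hint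
    (u.tendsto_cocompact.comp hray)

theorem SchwartzMap.rpow_mul_sq_norm_le_setIntegral_sq_norm_fderiv_smul [ProperSpace E]
    [CompleteSpace F] (u : 𝓢(E, F)) {e : E} (he : ‖e‖ = 1) {k r : ℝ} (hk : 1 < k)
    (hr : 0 < r)
    (hint : IntegrableOn (fun s ↦ s ^ k * ‖fderiv ℝ u (s • e)‖ ^ 2) (Ioi r)) :
    r ^ (k - 1) * ‖u (r • e)‖ ^ 2 ≤
      (∫ s in Ioi r, s ^ k * ‖fderiv ℝ u (s • e)‖ ^ 2) / (k - 1) := by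
  have hcont : Continuous fun s : ℝ ↦ ‖fderiv ℝ u (s • e)‖ :=
    (((SchwartzMap.fderivCLM ℝ E F u).continuous : Continuous (fderiv ℝ u)).comp
      (continuous_id.smul continuous_const)).norm
  have hu := u.norm_le_setIntegral_norm_fderiv_smul he r
    (integrableOn_Ioi_of_integrableOn_rpow_mul_sq hk hr hcont.aestronglyMeasurable hint)
  calc r ^ (k - 1) * ‖u (r • e)‖ ^ 2
      ≤ r ^ (k - 1) * (∫ s in Ioi r, ‖fderiv ℝ u (s • e)‖) ^ 2 := by gcongr
    _ ≤ _ := rpow_mul_sq_setIntegral_Ioi_le hk hr (fun s _ ↦ norm_nonneg _)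
      hcont.aestronglyMeasurable hint

end SchwartzRay

theorem measureReal_ball_pos {X : Type*} [PseudoMetricSpace X] [ProperSpace X]
    [MeasurableSpace X] (μ : Measure X) [μ.IsOpenPosMeasure] [IsFiniteMeasureOnCompacts μ]
    (x : X) {r : ℝ} (hr : 0 < r) : 0 < μ.real (Metric.ball x r) :=
  ENNReal.toReal_pos (Metric.measure_ball_pos μ x hr).ne' measure_ball_lt_top.ne

section SobolevRadial

variable {E F : Type*} [NormedAddCommGroup E] [InnerProductSpace ℝ E] [FiniteDimensional ℝ E]
  [MeasurableSpace E] [BorelSpace E] [NormedAddCommGroup F] [NormedSpace ℝ F]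

theorem pow_sub_one_eq_rpow {n : ℕ} (hn : 1 ≤ n) (s : ℝ) :
    s ^ (n - 1) = s ^ ((n : ℝ) - 1) := by
  rw [← Real.rpow_natCast, Nat.cast_sub hn, Nat.cast_one]

variable (u : 𝓢(E, F))

theorem SchwartzMap.integrableOn_rpow_mul_sq_norm_fderiv_smul_of_radial [Nontrivial E]
    (hrad : ∀ x y : E, ‖x‖ = ‖y‖ → u x = u y) {e : E} (he : ‖e‖ = 1) :
    IntegrableOn (fun s ↦ s ^ ((Module.finrank ℝ E : ℝ) - 1) * ‖fderiv ℝ u (s • e)‖ ^ 2)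
      (Ioi 0) := by
  have hDrad (a b : E) (hab : ‖a‖ = ‖b‖) : ‖fderiv ℝ u a‖ ^ 2 = ‖fderiv ℝ u b‖ ^ 2 := by
    rw [norm_fderiv_eq_of_radial hrad hab]
  have h := (integrable_iff_of_radial Measure.addHaar hDrad he).1
    (u.integrable_sq_norm_fderiv Measure.addHaar)
  simpa only [pow_sub_one_eq_rpow Module.finrank_pos, smul_eq_mul] using h

theorem SchwartzMap.integral_sq_norm_fderiv_eq_of_radial [Nontrivial E] (μ : Measure E)
    [μ.IsAddHaarMeasure] (hrad : ∀ x y : E, ‖x‖ = ‖y‖ → u x = u y) {e : E} (he : ‖e‖ = 1) :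
    ∫ y, ‖fderiv ℝ u y‖ ^ 2 ∂μ = Module.finrank ℝ E * μ.real (Metric.ball 0 1) *
      ∫ s in Ioi 0, s ^ ((Module.finrank ℝ E : ℝ) - 1) * ‖fderiv ℝ u (s • e)‖ ^ 2 := by
  have hDrad (a b : E) (hab : ‖a‖ = ‖b‖) : ‖fderiv ℝ u a‖ ^ 2 = ‖fderiv ℝ u b‖ ^ 2 := by
    rw [norm_fderiv_eq_of_radial hrad hab]
  have h := integral_eq_of_radial μ hDrad he
  simpa only [pow_sub_one_eq_rpow Module.finrank_pos, smul_eq_mul, nsmul_eq_mul, mul_assoc]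
    using h

theorem SchwartzMap.norm_pow_mul_sq_le_integral_sq_norm_fderiv_of_radial [CompleteSpace F]
    (μ : Measure E) [μ.IsAddHaarMeasure] (hn : 2 < Module.finrank ℝ E)
    (hrad : ∀ x y : E, ‖x‖ = ‖y‖ → u x = u y) (x : E) :
    ‖x‖ ^ (Module.finrank ℝ E - 2) * ‖u x‖ ^ 2 ≤
      (∫ y, ‖fderiv ℝ u y‖ ^ 2 ∂μ) /
        (Module.finrank ℝ E * (Module.finrank ℝ E - 2) * μ.real (Metric.ball 0 1)) := by
  have : Nontrivial E := Module.nontrivial_of_finrank_pos (R := ℝ) (by omega)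
  have hn' : (2 : ℝ) < Module.finrank ℝ E := by exact_mod_cast hn
  have hV := measureReal_ball_pos μ (0 : E) one_pos
  rcases (norm_nonneg x).eq_or_lt with hx | hr
  · rw [← hx, zero_pow (by omega), zero_mul]
    exact div_nonneg (integral_nonneg fun y ↦ by positivity)
      (mul_nonneg (mul_nonneg (by positivity) (by linarith)) hV.le)
  have he : ‖‖x‖⁻¹ • x‖ = 1 := by
    rw [norm_smul, norm_inv, norm_norm, inv_mul_cancel₀ hr.ne']
  set e := ‖x‖⁻¹ • x
  have hJ0 := u.integrableOn_rpow_mul_sq_norm_fderiv_smul_of_radial hrad he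
  have hray := u.rpow_mul_sq_norm_le_setIntegral_sq_norm_fderiv_smul he (by linarith) hr
    (hJ0.mono_set (Ioi_subset_Ioi hr.le))
  rw [smul_inv_smul₀ hr.ne'] at hray
  have hJ_mono := setIntegral_mono_set hJ0
    ((ae_restrict_iff' measurableSet_Ioi).2 (ae_of_all _ fun s (hs : 0 < s) ↦
      mul_nonneg (Real.rpow_nonneg hs.le _) (sq_nonneg ‖fderiv ℝ u (s • e)‖)))
    (Ioi_subset_Ioi hr.le).eventuallyLE
  calc ‖x‖ ^ (Module.finrank ℝ E - 2) * ‖u x‖ ^ 2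
      = ‖x‖ ^ ((Module.finrank ℝ E : ℝ) - 1 - 1) * ‖u x‖ ^ 2 := by
        rw [← Real.rpow_natCast, Nat.cast_sub hn.le]
        ring_nf
    _ ≤ _ := hray
    _ ≤ (∫ s in Ioi 0, s ^ ((Module.finrank ℝ E : ℝ) - 1) * ‖fderiv ℝ u (s • e)‖ ^ 2) /
          ((Module.finrank ℝ E : ℝ) - 2) := by
        rw [sub_sub, one_add_one_eq_two]
        exact div_le_div_of_nonneg_right hJ_mono (by linarith)
    _ = _ := by
        rw [u.integral_sq_norm_fderiv_eq_of_radial μ hrad he]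
        field_simp

end SobolevRadial

theorem radial_sobolev_R4 :
    ∃ C > 0, ∀ u : SchwartzMap (EuclideanSpace ℝ (Fin 4)) ℝ,
      (∀ x y : EuclideanSpace ℝ (Fin 4), ‖x‖ = ‖y‖ → u x = u y) →
      ∀ x : EuclideanSpace ℝ (Fin 4),
        ‖x‖ * |u x| ≤ C * (∫ y, ‖fderiv ℝ u y‖ ^ 2) ^ ((1:ℝ)/2) := by
  set V := (volume : Measure (EuclideanSpace ℝ (Fin 4))).real (Metric.ball 0 1)
  have hV : 0 < V := measureReal_ball_pos volume 0 one_pos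
  refine ⟨1 / √(8 * V), by positivity, fun u hrad x ↦ ?_⟩
  have h := u.norm_pow_mul_sq_le_integral_sq_norm_fderiv_of_radial volume (by simp) hrad x
  norm_num [finrank_euclideanSpace_fin] at h
  calc ‖x‖ * |u x| ≤ √((∫ y, ‖fderiv ℝ u y‖ ^ 2) / (8 * V)) := by
        apply Real.le_sqrt_of_sq_le
        rwa [mul_pow, sq_abs]
    _ = 1 / √(8 * V) * (∫ y, ‖fderiv ℝ u y‖ ^ 2) ^ ((1:ℝ)/2) := by
        rw [Real.sqrt_div' _ (by positivity), ← Real.sqrt_eq_rpow]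
        ring
end

section
/- There exists C > 0 such that for all smooth compactly supported u : ℝ⁴ → ℝ, ‖∇u‖²_{L⁴(ℝ⁴)} ≤ C ‖|x'|^{1/4} D²u‖_{L⁴(ℝ⁴)} · ‖|x'|^{−1/4} u‖_{L⁴(ℝ⁴)}, where x' = (x₁,x₂,x₃) and D²u denotes the full Hessian of u. -/
open Real MeasureTheory Metric Set Filter

set_option maxHeartbeats 1600000

noncomputable section

namespace WGN

abbrev E3 : Type := EuclideanSpace ℝ (Fin 3)
abbrev X : Type := E3 × ℝ

instance : (volume : Measure X).IsAddHaarMeasure :=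
  Measure.prod.instIsAddHaarMeasure volume volume

lemma coord_le (a : E3) (i : Fin 3) : |a i| ≤ ‖a‖ := by
  have h : |a i| = Real.sqrt (‖a i‖ ^ 2) := by
    rw [Real.sqrt_sq_eq_abs]; simp [Real.norm_eq_abs]
  rw [h, EuclideanSpace.norm_eq]
  apply Real.sqrt_le_sqrt
  exact Finset.single_le_sum (f := fun j => ‖a j‖ ^ 2) (fun j _ => by positivity) (Finset.mem_univ i)

lemma pow4_sum_le (w x y z : ℝ) :
    (w + x + y + z) ^ 4 ≤ 64 * (w ^ 4 + x ^ 4 + y ^ 4 + z ^ 4) := by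
  have h2 : (w + x + y + z) ^ 2 ≤ 4 * (w ^ 2 + x ^ 2 + y ^ 2 + z ^ 2) := by
    nlinarith [sq_nonneg (w - x), sq_nonneg (w - y), sq_nonneg (w - z), sq_nonneg (x - y),
      sq_nonneg (x - z), sq_nonneg (y - z)]
  have h2' : (w ^ 2 + x ^ 2 + y ^ 2 + z ^ 2) ^ 2 ≤ 4 * (w ^ 4 + x ^ 4 + y ^ 4 + z ^ 4) := by
    nlinarith [sq_nonneg (w ^ 2 - x ^ 2), sq_nonneg (w ^ 2 - y ^ 2), sq_nonneg (w ^ 2 - z ^ 2),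
      sq_nonneg (x ^ 2 - y ^ 2), sq_nonneg (x ^ 2 - z ^ 2), sq_nonneg (y ^ 2 - z ^ 2)]
  calc (w + x + y + z) ^ 4 = ((w + x + y + z) ^ 2) ^ 2 := by ring
    _ ≤ (4 * (w ^ 2 + x ^ 2 + y ^ 2 + z ^ 2)) ^ 2 := by
        apply sq_le_sq' _ h2
        nlinarith [sq_nonneg (w + x + y + z), sq_nonneg w, sq_nonneg x, sq_nonneg y, sq_nonneg z]
    _ = 16 * (w ^ 2 + x ^ 2 + y ^ 2 + z ^ 2) ^ 2 := by ring
    _ ≤ 16 * (4 * (w ^ 4 + x ^ 4 + y ^ 4 + z ^ 4)) := by linarith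
    _ = 64 * (w ^ 4 + x ^ 4 + y ^ 4 + z ^ 4) := by ring

def v0 : X := (EuclideanSpace.single 0 1, 0)
def v1 : X := (EuclideanSpace.single 1 1, 0)
def v2 : X := (EuclideanSpace.single 2 1, 0)
def v3 : X := (0, 1)

lemma norm_v0 : ‖v0‖ ≤ 1 := by
  simp [v0, Prod.norm_def, EuclideanSpace.norm_single]
lemma norm_v1 : ‖v1‖ ≤ 1 := by
  simp [v1, Prod.norm_def, EuclideanSpace.norm_single]
lemma norm_v2 : ‖v2‖ ≤ 1 := by
  simp [v2, Prod.norm_def, EuclideanSpace.norm_single]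
lemma norm_v3 : ‖v3‖ ≤ 1 := by
  simp [v3, Prod.norm_def]

lemma opnorm_le_sum (f : X →L[ℝ] ℝ) :
    ‖f‖ ≤ |f v0| + |f v1| + |f v2| + |f v3| := by
  refine ContinuousLinearMap.opNorm_le_bound f (by positivity) fun x => ?_
  obtain ⟨a, t⟩ := x
  have hsum : ((a, t) : X) = (a 0) • v0 + (a 1) • v1 + (a 2) • v2 + t • v3 := by
    refine Prod.ext ?_ ?_
    · show a = a 0 • EuclideanSpace.single 0 1 + a 1 • EuclideanSpace.single 1 1
        + a 2 • EuclideanSpace.single 2 1 + t • (0 : E3)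
      ext j
      fin_cases j <;>
        simp [EuclideanSpace.single_apply]
    · simp [v0, v1, v2, v3]
  have hf : f (a, t) = a 0 * f v0 + a 1 * f v1 + a 2 * f v2 + t * f v3 := by
    rw [hsum]
    simp only [map_add, ContinuousLinearMap.map_smul, smul_eq_mul]
  have h0 : |a 0| ≤ ‖((a, t) : X)‖ := (coord_le a 0).trans (norm_fst_le ((a, t) : X))
  have h1 : |a 1| ≤ ‖((a, t) : X)‖ := (coord_le a 1).trans (norm_fst_le ((a, t) : X))
  have h2 : |a 2| ≤ ‖((a, t) : X)‖ := (coord_le a 2).trans (norm_fst_le ((a, t) : X))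
  have h3 : |t| ≤ ‖((a, t) : X)‖ := by
    simpa [Real.norm_eq_abs] using norm_snd_le ((a, t) : X)
  rw [Real.norm_eq_abs, hf]
  calc |a 0 * f v0 + a 1 * f v1 + a 2 * f v2 + t * f v3|
      ≤ |a 0 * f v0 + a 1 * f v1 + a 2 * f v2| + |t * f v3| := abs_add_le _ _
    _ ≤ (|a 0 * f v0| + |a 1 * f v1| + |a 2 * f v2|) + |t * f v3| := by
        exact add_le_add_left (abs_add_three _ _ _) _
    _ = |a 0| * |f v0| + |a 1| * |f v1| + |a 2| * |f v2| + |t| * |f v3| := by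
        simp [abs_mul]
    _ ≤ ‖((a, t) : X)‖ * |f v0| + ‖((a, t) : X)‖ * |f v1| + ‖((a, t) : X)‖ * |f v2|
        + ‖((a, t) : X)‖ * |f v3| := by
        gcongr <;> positivity
    _ = (|f v0| + |f v1| + |f v2| + |f v3|) * ‖((a, t) : X)‖ := by ring

lemma weight_integrableOn (R : ℝ) :
    IntegrableOn (fun y : E3 => ‖y‖ ^ (-1 : ℝ)) (closedBall 0 R) volume := by
  have hmeas : Measurable fun y : E3 => ‖y‖ ^ (-1 : ℝ) := by fun_prop
  refine ⟨hmeas.aestronglyMeasurable, ?_⟩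
  have hpos : 0 ≤ᵐ[(volume : Measure E3).restrict (closedBall 0 R)]
      fun y : E3 => ‖y‖ ^ (-1 : ℝ) :=
    Filter.Eventually.of_forall fun y => Real.rpow_nonneg (norm_nonneg _) _
  rw [hasFiniteIntegral_iff_ofReal hpos]
  set μ := (volume : Measure E3).restrict (closedBall 0 R) with hμ
  rw [lintegral_eq_lintegral_meas_le μ hpos hmeas.aemeasurable]
  have key : ∀ t : ℝ, 0 < t →
      μ {a : E3 | t ≤ ‖a‖ ^ (-1 : ℝ)} ≤
        min (volume (closedBall (0:E3) R)) (volume (closedBall (0:E3) t⁻¹)) := by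
    intro t ht
    have hsub : {a : E3 | t ≤ ‖a‖ ^ (-1 : ℝ)} ⊆ closedBall (0:E3) t⁻¹ := by
      intro a ha
      simp only [mem_setOf_eq] at ha
      rcases eq_or_ne a 0 with rfl | h0
      · simp only [mem_closedBall, dist_self]
        positivity
      · have hna : 0 < ‖a‖ := norm_pos_iff.2 h0
        rw [mem_closedBall_zero_iff]
        have h1 : t ≤ ‖a‖⁻¹ := by rwa [Real.rpow_neg_one] at ha
        calc ‖a‖ = (‖a‖⁻¹)⁻¹ := by rw [inv_inv]
          _ ≤ t⁻¹ := by
            apply inv_anti₀ ht h1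
    rw [hμ, Measure.restrict_apply' measurableSet_closedBall]
    exact le_min (measure_mono inter_subset_right)
      (measure_mono (inter_subset_left.trans hsub))
  have hsplit : ∫⁻ t in Ioi (0:ℝ), μ {a : E3 | t ≤ ‖a‖ ^ (-1 : ℝ)} ≤
      (∫⁻ t in Ioc (0:ℝ) 1, volume (closedBall (0:E3) R)) +
      ∫⁻ t in Ioi (1:ℝ), volume (closedBall (0:E3) t⁻¹) := by
    calc ∫⁻ t in Ioi (0:ℝ), μ {a : E3 | t ≤ ‖a‖ ^ (-1 : ℝ)}
        ≤ ∫⁻ t in Ioc (0:ℝ) 1 ∪ Ioi 1, μ {a : E3 | t ≤ ‖a‖ ^ (-1 : ℝ)} :=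
          lintegral_mono_set Ioi_subset_Ioc_union_Ioi
      _ ≤ (∫⁻ t in Ioc (0:ℝ) 1, μ {a : E3 | t ≤ ‖a‖ ^ (-1 : ℝ)}) +
          ∫⁻ t in Ioi (1:ℝ), μ {a : E3 | t ≤ ‖a‖ ^ (-1 : ℝ)} := lintegral_union_le _ _ _
      _ ≤ _ := by
          refine add_le_add ?_ ?_
          · exact setLIntegral_mono' measurableSet_Ioc fun t ht =>
              (key t ht.1).trans (min_le_left _ _)
          · exact setLIntegral_mono' measurableSet_Ioi fun t ht =>
              (key t (lt_trans one_pos ht)).trans (min_le_right _ _)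
  refine lt_of_le_of_lt hsplit (ENNReal.add_lt_top.2 ⟨?_, ?_⟩)
  · rw [setLIntegral_const]
    exact ENNReal.mul_lt_top measure_closedBall_lt_top (by simp [Real.volume_Ioc])
  · have heq : ∀ t ∈ Ioi (1:ℝ), volume (closedBall (0:E3) t⁻¹) =
        ENNReal.ofReal (t ^ (-3 : ℝ)) * volume (ball (0:E3) 1) := by
      intro t ht
      have ht0 : (0:ℝ) < t := lt_trans one_pos ht
      rw [Measure.addHaar_closedBall _ _ (by positivity)]
      congr 2
      rw [finrank_euclideanSpace_fin]
      have h3 : t ^ (-3:ℝ) = (t ^ (3:ℕ))⁻¹ := by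
        rw [show (-3:ℝ) = -((3:ℕ):ℝ) by norm_num, Real.rpow_neg ht0.le, Real.rpow_natCast]
      rw [h3, inv_pow]
    rw [setLIntegral_congr_fun measurableSet_Ioi heq]
    rw [lintegral_mul_const' _ _ measure_ball_lt_top.ne]
    apply ENNReal.mul_lt_top _ measure_ball_lt_top
    apply IntegrableOn.setLIntegral_lt_top
    exact integrableOn_Ioi_rpow_of_lt (by norm_num) one_pos

lemma rpow_quarter (c d : ℝ) (hc : 0 ≤ c) :
    (c ^ (-(1:ℝ)/4) * d) ^ 4 = c ^ (-1 : ℝ) * d ^ 4 := by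
  rw [mul_pow, ← Real.rpow_natCast (c ^ (-(1:ℝ)/4)) 4, ← Real.rpow_mul hc]
  norm_num

lemma b4_integrable {u : X → ℝ} (hu : Continuous u) (hsupp : HasCompactSupport u) :
    Integrable (fun x : X => ‖x.1‖ ^ (-1 : ℝ) * |u x| ^ 4) volume := by
  obtain ⟨R, hR⟩ : ∃ R : ℝ, tsupport u ⊆ closedBall 0 R :=
    hsupp.isBounded.subset_closedBall 0
  obtain ⟨x₀, hx₀⟩ := hu.norm.exists_forall_ge_of_hasCompactSupport hsupp.norm
  set M : ℝ := ‖u x₀‖ with hM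
  have hM0 : 0 ≤ M := norm_nonneg _
  set g : X → ℝ := fun x =>
    (closedBall (0:E3) R).indicator (fun y => ‖y‖ ^ (-1 : ℝ)) x.1 *
    (closedBall (0:ℝ) R).indicator (fun _ => M ^ 4) x.2 with hg
  have hgint : Integrable g volume := by
    rw [hg, Measure.volume_eq_prod]
    apply Integrable.mul_prod
    · rw [integrable_indicator_iff measurableSet_closedBall]
      exact weight_integrableOn R
    · rw [integrable_indicator_iff measurableSet_closedBall]
      exact integrableOn_const measure_closedBall_lt_top.ne
  apply Integrable.mono' hgint
  · apply AEStronglyMeasurable.mul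
    · exact (Measurable.aestronglyMeasurable (by fun_prop))
    · exact (hu.abs.pow 4).aestronglyMeasurable
  · filter_upwards with x
    rw [Real.norm_eq_abs, abs_of_nonneg (by positivity)]
    rcases eq_or_ne (u x) 0 with h0 | h0
    · rw [h0]
      simp only [abs_zero]
      rw [zero_pow (by norm_num), mul_zero]
      rw [hg]
      apply mul_nonneg
      · apply indicator_nonneg
        intro y _
        positivity
      · apply indicator_nonneg
        intro y _
        positivity
    · have hxs : x ∈ tsupport u := subset_closure (by simpa [Function.mem_support] using h0)
      have hxR : ‖x.1‖ ≤ R ∧ ‖x.2‖ ≤ R := by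
        have := hR hxs
        rw [mem_closedBall_zero_iff] at this
        exact ⟨(norm_fst_le x).trans this, (norm_snd_le x).trans this⟩
      have h1 : x.1 ∈ closedBall (0:E3) R := by
        rw [mem_closedBall_zero_iff]; exact hxR.1
      have h2 : x.2 ∈ closedBall (0:ℝ) R := by
        rw [mem_closedBall_zero_iff]; exact hxR.2
      rw [hg]
      simp only [indicator_of_mem h1, indicator_of_mem h2]
      apply mul_le_mul_of_nonneg_left _ (by positivity)
      have : |u x| ≤ M := by simpa [Real.norm_eq_abs] using hx₀ x
      exact pow_le_pow_left₀ (abs_nonneg _) this 4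

lemma plane_null : volume {x : X | x.1 = 0} = 0 := by
  have h : {x : X | x.1 = 0} = ({(0:E3)} : Set E3) ×ˢ (univ : Set ℝ) := by
    ext x
    simp only [mem_setOf_eq, Set.mem_prod, Set.mem_singleton_iff, Set.mem_univ, and_true]
  rw [h, Measure.volume_eq_prod, Measure.prod_prod, measure_singleton, zero_mul]

lemma ae_fst_ne_zero : ∀ᵐ x : X, x.1 ≠ (0 : E3) := by
  rw [ae_iff]
  simpa [not_not] using plane_null

lemma rpow_two_eq (y : ℝ) : y ^ (2:ℝ) = y ^ (2:ℕ) := by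
  rw [show (2:ℝ) = ((2:ℕ):ℝ) by norm_num, Real.rpow_natCast]

lemma sq_sq (y : ℝ) : (y ^ (2:ℕ)) ^ (2:ℕ) = y ^ (4:ℕ) := by ring

/-- Hölder step:
`∫ |u| ‖D²u‖ w² ≤ (∫ a⁴)^{1/4} (∫ b⁴)^{1/4} (∫ w⁴)^{1/2}`. -/
lemma holder_step {u : X → ℝ} (hu : ContDiff ℝ (⊤ : ℕ∞) u) (hsupp : HasCompactSupport u)
    {w : X → ℝ} (hw : Continuous w) (hwsupp : HasCompactSupport w) :
    ∫ x : X, |u x| * ‖iteratedFDeriv ℝ 2 u x‖ * w x ^ 2 ≤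
      (∫ x : X, (‖x.1‖ ^ ((1:ℝ)/4) * ‖iteratedFDeriv ℝ 2 u x‖) ^ 4) ^ ((1:ℝ)/4) *
      (∫ x : X, (‖x.1‖ ^ (-(1:ℝ)/4) * |u x|) ^ 4) ^ ((1:ℝ)/4) *
      (∫ x : X, w x ^ 4) ^ ((1:ℝ)/2) := by
  have hD2c : Continuous fun x : X => ‖iteratedFDeriv ℝ 2 u x‖ :=
    (hu.continuous_iteratedFDeriv (WithTop.coe_le_coe.2 le_top)).norm
  have hwac : Continuous fun x : X => ‖x.1‖ ^ ((1:ℝ)/4) :=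
    (continuous_fst.norm).rpow_const (fun x => Or.inr (by norm_num))
  have hac : Continuous fun x : X => ‖x.1‖ ^ ((1:ℝ)/4) * ‖iteratedFDeriv ℝ 2 u x‖ :=
    hwac.mul hD2c
  have hbm : AEStronglyMeasurable (fun x : X => ‖x.1‖ ^ (-(1:ℝ)/4) * |u x|) volume := by
    apply Measurable.aestronglyMeasurable
    have h1 : Measurable fun x : X => ‖x.1‖ ^ (-(1:ℝ)/4) := by fun_prop
    exact h1.mul hu.continuous.abs.measurable
  -- integrability of a^4
  have ha4supp : HasCompactSupport
      fun x : X => (‖x.1‖ ^ ((1:ℝ)/4) * ‖iteratedFDeriv ℝ 2 u x‖) ^ 4 := by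
    apply HasCompactSupport.mono' (hsupp.iteratedFDeriv (𝕜 := ℝ) 2)
    intro x hx
    simp only [Function.mem_support] at hx
    apply subset_closure
    simp only [Function.mem_support]
    intro h
    apply hx
    rw [h]
    simp
  have ha4int : Integrable
      (fun x : X => (‖x.1‖ ^ ((1:ℝ)/4) * ‖iteratedFDeriv ℝ 2 u x‖) ^ 4) volume :=
    (hac.pow 4).integrable_of_hasCompactSupport ha4supp
  -- integrability of b^4
  have hb4int : Integrable
      (fun x : X => (‖x.1‖ ^ (-(1:ℝ)/4) * |u x|) ^ 4) volume := by
    apply (b4_integrable hu.continuous hsupp).congr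
    exact Filter.Eventually.of_forall fun x => (rpow_quarter _ _ (norm_nonneg _)).symm
  -- integrability of w^4
  have hw4int : Integrable (fun x : X => w x ^ 4) volume :=
    (hw.pow 4).integrable_of_hasCompactSupport
      (hwsupp.mono' fun x hx => subset_closure (by
        simp only [Function.mem_support] at hx ⊢
        exact fun h => hx (by simp [h])))
  have conj2 : Real.HolderConjugate 2 2 := Real.holderConjugate_iff.2 ⟨one_lt_two, by norm_num⟩
  have hofReal2 : ENNReal.ofReal (2:ℝ) = 2 := by simp
  -- nonnegativity of integrals
  have hA0 : 0 ≤ ∫ x : X, (‖x.1‖ ^ ((1:ℝ)/4) * ‖iteratedFDeriv ℝ 2 u x‖) ^ 4 :=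
    integral_nonneg fun x => by positivity
  have hB0 : 0 ≤ ∫ x : X, (‖x.1‖ ^ (-(1:ℝ)/4) * |u x|) ^ 4 :=
    integral_nonneg fun x => by positivity
  -- MemLp facts
  have hFm : AEStronglyMeasurable
      (fun x : X => (‖x.1‖ ^ ((1:ℝ)/4) * ‖iteratedFDeriv ℝ 2 u x‖) *
        (‖x.1‖ ^ (-(1:ℝ)/4) * |u x|)) volume :=
    hac.aestronglyMeasurable.mul hbm
  have hF2int : Integrable (fun x : X =>
      ((‖x.1‖ ^ ((1:ℝ)/4) * ‖iteratedFDeriv ℝ 2 u x‖) *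
        (‖x.1‖ ^ (-(1:ℝ)/4) * |u x|)) ^ 2) volume := by
    apply Integrable.mono' ((ha4int.add hb4int).div_const 2)
    · exact (hFm.pow 2)
    · filter_upwards with x
      simp only [Pi.add_apply]
      rw [Real.norm_eq_abs, abs_of_nonneg (by positivity)]
      nlinarith [sq_nonneg ((‖x.1‖ ^ ((1:ℝ)/4) * ‖iteratedFDeriv ℝ 2 u x‖) ^ 2
        - (‖x.1‖ ^ (-(1:ℝ)/4) * |u x|) ^ 2)]
  have hF : MemLp (fun x : X =>
      (‖x.1‖ ^ ((1:ℝ)/4) * ‖iteratedFDeriv ℝ 2 u x‖) *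
        (‖x.1‖ ^ (-(1:ℝ)/4) * |u x|)) (ENNReal.ofReal 2) volume := by
    rw [hofReal2]
    exact (memLp_two_iff_integrable_sq hFm).2 hF2int
  have hG : MemLp (fun x : X => w x ^ 2) (ENNReal.ofReal 2) volume := by
    rw [hofReal2]
    refine (memLp_two_iff_integrable_sq ((hw.pow 2).aestronglyMeasurable)).2 ?_
    exact hw4int.congr (Filter.Eventually.of_forall fun x => by simp only [Pi.pow_apply]; ring)
  have hFa : MemLp (fun x : X =>
      (‖x.1‖ ^ ((1:ℝ)/4) * ‖iteratedFDeriv ℝ 2 u x‖) ^ 2) (ENNReal.ofReal 2) volume := by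
    rw [hofReal2]
    refine (memLp_two_iff_integrable_sq ((hac.pow 2).aestronglyMeasurable)).2 ?_
    exact ha4int.congr (Filter.Eventually.of_forall fun x => by simp only [Pi.pow_apply]; ring)
  have hb2m : AEStronglyMeasurable (fun x : X => (‖x.1‖ ^ (-(1:ℝ)/4) * |u x|) ^ 2) volume := by
    apply Measurable.aestronglyMeasurable
    have h1 : Measurable fun x : X => ‖x.1‖ ^ (-(1:ℝ)/4) := by fun_prop
    exact (h1.mul hu.continuous.abs.measurable).pow_const 2
  have hFb : MemLp (fun x : X =>
      (‖x.1‖ ^ (-(1:ℝ)/4) * |u x|) ^ 2) (ENNReal.ofReal 2) volume := by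
    rw [hofReal2]
    refine (memLp_two_iff_integrable_sq hb2m).2 ?_
    exact hb4int.congr (Filter.Eventually.of_forall fun x => by ring)
  -- step 0 : a.e. rewrite
  have step0 : ∫ x : X, |u x| * ‖iteratedFDeriv ℝ 2 u x‖ * w x ^ 2
      = ∫ x : X, ((‖x.1‖ ^ ((1:ℝ)/4) * ‖iteratedFDeriv ℝ 2 u x‖) *
          (‖x.1‖ ^ (-(1:ℝ)/4) * |u x|)) * w x ^ 2 := by
    apply integral_congr_ae
    filter_upwards [ae_fst_ne_zero] with x hx
    have h14 : ‖x.1‖ ^ ((1:ℝ)/4) * ‖x.1‖ ^ (-(1:ℝ)/4) = 1 := by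
      rw [← Real.rpow_add (norm_pos_iff.2 hx)]
      norm_num
    calc |u x| * ‖iteratedFDeriv ℝ 2 u x‖ * w x ^ 2
        = (‖x.1‖ ^ ((1:ℝ)/4) * ‖x.1‖ ^ (-(1:ℝ)/4)) *
            (|u x| * ‖iteratedFDeriv ℝ 2 u x‖ * w x ^ 2) := by rw [h14]; ring
      _ = ((‖x.1‖ ^ ((1:ℝ)/4) * ‖iteratedFDeriv ℝ 2 u x‖) *
            (‖x.1‖ ^ (-(1:ℝ)/4) * |u x|)) * w x ^ 2 := by ring
  -- step 1 : Hölder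
  have H1 := integral_mul_le_Lp_mul_Lq_of_nonneg conj2
    (Filter.Eventually.of_forall fun x => by positivity)
    (Filter.Eventually.of_forall fun x => by positivity) hF hG
  simp only [rpow_two_eq, sq_sq] at H1
  -- step 2 : Hölder again
  have H2 := integral_mul_le_Lp_mul_Lq_of_nonneg conj2
    (Filter.Eventually.of_forall fun x => by positivity)
    (Filter.Eventually.of_forall fun x => by positivity) hFa hFb
  simp only [rpow_two_eq, sq_sq] at H2
  -- combine
  have hS0 : 0 ≤ ∫ x : X, ((‖x.1‖ ^ ((1:ℝ)/4) * ‖iteratedFDeriv ℝ 2 u x‖) *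
      (‖x.1‖ ^ (-(1:ℝ)/4) * |u x|)) ^ 2 := integral_nonneg fun x => by positivity
  have hsq_split : ∫ x : X, ((‖x.1‖ ^ ((1:ℝ)/4) * ‖iteratedFDeriv ℝ 2 u x‖) *
      (‖x.1‖ ^ (-(1:ℝ)/4) * |u x|)) ^ 2
      = ∫ x : X, (‖x.1‖ ^ ((1:ℝ)/4) * ‖iteratedFDeriv ℝ 2 u x‖) ^ 2 *
        (‖x.1‖ ^ (-(1:ℝ)/4) * |u x|) ^ 2 := by
    apply integral_congr_ae
    exact Filter.Eventually.of_forall fun x => by ring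
  have hstep2 : (∫ x : X, ((‖x.1‖ ^ ((1:ℝ)/4) * ‖iteratedFDeriv ℝ 2 u x‖) *
        (‖x.1‖ ^ (-(1:ℝ)/4) * |u x|)) ^ 2) ^ ((1:ℝ)/2)
      ≤ (∫ x : X, (‖x.1‖ ^ ((1:ℝ)/4) * ‖iteratedFDeriv ℝ 2 u x‖) ^ 4) ^ ((1:ℝ)/4) *
        (∫ x : X, (‖x.1‖ ^ (-(1:ℝ)/4) * |u x|) ^ 4) ^ ((1:ℝ)/4) := by
    have := Real.rpow_le_rpow hS0 (le_trans (le_of_eq hsq_split) H2) (by norm_num : (0:ℝ) ≤ 1/2)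
    refine le_trans this (le_of_eq ?_)
    rw [Real.mul_rpow (Real.rpow_nonneg hA0 _) (Real.rpow_nonneg hB0 _),
      ← Real.rpow_mul hA0, ← Real.rpow_mul hB0]
    norm_num
  calc ∫ x : X, |u x| * ‖iteratedFDeriv ℝ 2 u x‖ * w x ^ 2
      = ∫ x : X, ((‖x.1‖ ^ ((1:ℝ)/4) * ‖iteratedFDeriv ℝ 2 u x‖) *
          (‖x.1‖ ^ (-(1:ℝ)/4) * |u x|)) * w x ^ 2 := step0
    _ ≤ (∫ x : X, ((‖x.1‖ ^ ((1:ℝ)/4) * ‖iteratedFDeriv ℝ 2 u x‖) *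
          (‖x.1‖ ^ (-(1:ℝ)/4) * |u x|)) ^ 2) ^ ((1:ℝ)/2) *
        (∫ x : X, w x ^ 4) ^ ((1:ℝ)/2) := H1
    _ ≤ ((∫ x : X, (‖x.1‖ ^ ((1:ℝ)/4) * ‖iteratedFDeriv ℝ 2 u x‖) ^ 4) ^ ((1:ℝ)/4) *
        (∫ x : X, (‖x.1‖ ^ (-(1:ℝ)/4) * |u x|) ^ 4) ^ ((1:ℝ)/4)) *
        (∫ x : X, w x ^ 4) ^ ((1:ℝ)/2) := by
        apply mul_le_mul_of_nonneg_right hstep2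
        exact Real.rpow_nonneg (integral_nonneg fun x => by positivity) _
    _ = _ := by ring

lemma key_direction {u : X → ℝ} (hu : ContDiff ℝ (⊤ : ℕ∞) u) (hsupp : HasCompactSupport u)
    {v : X} (hv : ‖v‖ ≤ 1) :
    ∫ x : X, (fderiv ℝ u x v) ^ 4 ≤
      3 * ((∫ x : X, (‖x.1‖ ^ ((1:ℝ)/4) * ‖iteratedFDeriv ℝ 2 u x‖) ^ 4) ^ ((1:ℝ)/4) *
        (∫ x : X, (‖x.1‖ ^ (-(1:ℝ)/4) * |u x|) ^ 4) ^ ((1:ℝ)/4) *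
        (∫ x : X, ‖fderiv ℝ u x‖ ^ 4) ^ ((1:ℝ)/2)) := by
  set g : X → ℝ := fun x => fderiv ℝ u x v with hgdef
  have hfd_cd : ContDiff ℝ (⊤ : ℕ∞) (fderiv ℝ u) := hu.fderiv_right (by simp)
  have hg_cd : ContDiff ℝ (⊤ : ℕ∞) g := hfd_cd.clm_apply contDiff_const
  have hg_cont : Continuous g := hg_cd.continuous
  have hg_supp : HasCompactSupport g := hsupp.fderiv_apply ℝ v
  have hg_diff : Differentiable ℝ g := hg_cd.differentiable (by simp)
  set h : X → ℝ := fun x => fderiv ℝ g x v with hhdef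
  have hh_cont : Continuous h := by
    have hgd2 : ContDiff ℝ (⊤ : ℕ∞) (fderiv ℝ g) := hg_cd.fderiv_right (by simp)
    exact (hgd2.clm_apply contDiff_const).continuous
  have hD2c : Continuous fun x : X => ‖iteratedFDeriv ℝ 2 u x‖ :=
    (hu.continuous_iteratedFDeriv (WithTop.coe_le_coe.2 le_top)).norm
  -- derivative of g^3
  have hfderivG : ∀ x : X, fderiv ℝ (fun y => g y ^ 3) x v = 3 * g x ^ 2 * h x := by
    intro x
    have hgd : HasFDerivAt g (fderiv ℝ g x) x := (hg_diff x).hasFDerivAt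
    have hp : HasDerivAt (fun s : ℝ => s ^ 3) (3 * g x ^ 2) (g x) := by
      simpa using hasDerivAt_pow 3 (g x)
    have hc := hp.comp_hasFDerivAt x hgd
    have : fderiv ℝ (fun y => g y ^ 3) x = (3 * g x ^ 2) • fderiv ℝ g x := by
      have := hc.fderiv
      simpa [Function.comp_def] using this
    rw [this]
    simp [hhdef, smul_eq_mul]
  -- compact support facts
  have hG_supp : HasCompactSupport (fun x : X => g x ^ 3) :=
    hg_supp.mono' fun x hx => subset_closure (by
      simp only [Function.mem_support] at hx ⊢
      exact fun hh0 => hx (by rw [hh0]; simp))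
  -- integration by parts
  have h1 : Integrable (fun x : X => fderiv ℝ u x v * g x ^ 3) volume := by
    apply (hg_cont.mul (hg_cont.pow 3)).integrable_of_hasCompactSupport
    exact (hg_supp.mono' fun x hx => subset_closure (by
      simp only [Function.mem_support] at hx ⊢
      exact fun hh0 => hx (by simp [hh0])))
  have h2 : Integrable (fun x : X => u x * fderiv ℝ (fun y => g y ^ 3) x v) volume := by
    have hcont : Continuous fun x : X => u x * fderiv ℝ (fun y => g y ^ 3) x v := by
      have : (fun x : X => u x * fderiv ℝ (fun y => g y ^ 3) x v)
          = fun x : X => u x * (3 * g x ^ 2 * h x) := by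
        funext x; rw [hfderivG]
      rw [this]
      exact hu.continuous.mul ((continuous_const.mul (hg_cont.pow 2)).mul hh_cont)
    apply hcont.integrable_of_hasCompactSupport
    exact hsupp.mono' fun x hx => subset_closure (by
      simp only [Function.mem_support] at hx ⊢
      exact fun hh0 => hx (by rw [hh0, zero_mul]))
  have h3 : Integrable (fun x : X => u x * g x ^ 3) volume := by
    apply (hu.continuous.mul (hg_cont.pow 3)).integrable_of_hasCompactSupport
    exact hsupp.mono' fun x hx => subset_closure (by
      simp only [Function.mem_support] at hx ⊢
      exact fun hh0 => hx (by simp [hh0]))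
  have hibp := integral_mul_fderiv_eq_neg_fderiv_mul_of_integrable h1 h2 h3
    (fun x _ => hu.differentiable (by simp) x) (fun x _ => (hg_cd.pow 3).differentiable (by simp) x)
  -- ∫ g⁴ = -∫ u * (3 g² h)
  have e1 : ∫ x : X, g x ^ 4 = - ∫ x : X, u x * (3 * g x ^ 2 * h x) := by
    have l1 : ∫ x : X, g x ^ 4 = ∫ x : X, fderiv ℝ u x v * g x ^ 3 := by
      apply integral_congr_ae
      exact Filter.Eventually.of_forall fun x => by rw [hgdef]; ring
    have l2 : ∫ x : X, u x * (3 * g x ^ 2 * h x)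
        = ∫ x : X, u x * fderiv ℝ (fun y => g y ^ 3) x v := by
      apply integral_congr_ae
      refine Filter.Eventually.of_forall fun x => ?_
      show u x * (3 * g x ^ 2 * h x) = u x * fderiv ℝ (fun y => g y ^ 3) x v
      rw [hfderivG x]
    rw [l1, l2, hibp, neg_neg]
  -- second derivative bound
  have hhb : ∀ x : X, |h x| ≤ ‖iteratedFDeriv ℝ 2 u x‖ := by
    intro x
    have hx2 : h x = iteratedFDeriv ℝ 2 u x ![v, v] := by
      rw [iteratedFDeriv_two_apply]
      have hdiff : DifferentiableAt ℝ (fderiv ℝ u) x := (hfd_cd.differentiable (by simp)) x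
      have : fderiv ℝ g x = (fderiv ℝ (fderiv ℝ u) x).flip v := by
        have hconst : DifferentiableAt ℝ (fun _ : X => v) x := differentiableAt_const v
        have := fderiv_clm_apply hdiff hconst
        simpa using this
      rw [hhdef]
      simp only [this]
      rfl
    rw [hx2]
    have hle := (iteratedFDeriv ℝ 2 u x).le_opNorm ![v, v]
    have hprod : ∏ i : Fin 2, ‖(![v, v] : Fin 2 → X) i‖ ≤ 1 := by
      rw [Fin.prod_univ_two]
      simp only [Matrix.cons_val_zero, Matrix.cons_val_one, Matrix.head_cons]
      calc ‖v‖ * ‖v‖ ≤ 1 * 1 := by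
            apply mul_le_mul hv hv (norm_nonneg _) zero_le_one
        _ = 1 := mul_one 1
    calc |iteratedFDeriv ℝ 2 u x ![v, v]| = ‖iteratedFDeriv ℝ 2 u x ![v, v]‖ := by
          rw [Real.norm_eq_abs]
      _ ≤ ‖iteratedFDeriv ℝ 2 u x‖ * ∏ i : Fin 2, ‖(![v, v] : Fin 2 → X) i‖ := hle
      _ ≤ ‖iteratedFDeriv ℝ 2 u x‖ * 1 := by
          apply mul_le_mul_of_nonneg_left hprod (norm_nonneg _)
      _ = ‖iteratedFDeriv ℝ 2 u x‖ := mul_one _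
  -- bound ∫ g⁴ ≤ 3 ∫ |u| ‖D²u‖ g²
  have habs_int : Integrable (fun x : X => |u x| * ‖iteratedFDeriv ℝ 2 u x‖ * g x ^ 2)
      volume := by
    apply ((hu.continuous.abs.mul hD2c).mul (hg_cont.pow 2)).integrable_of_hasCompactSupport
    exact hsupp.mono' fun x hx => subset_closure (by
      simp only [Function.mem_support] at hx ⊢
      exact fun hh0 => hx (by simp [hh0]))
  have hneg_int : Integrable (fun x : X => -(u x * (3 * g x ^ 2 * h x))) volume := by
    have : (fun x : X => -(u x * (3 * g x ^ 2 * h x)))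
        = fun x : X => -(u x * fderiv ℝ (fun y => g y ^ 3) x v) := by
      funext x; rw [hfderivG]
    rw [this]
    exact h2.neg
  have e2 : ∫ x : X, g x ^ 4 ≤ 3 * ∫ x : X, |u x| * ‖iteratedFDeriv ℝ 2 u x‖ * g x ^ 2 := by
    rw [e1, ← integral_neg, ← integral_const_mul]
    apply integral_mono hneg_int (habs_int.const_mul 3)
    intro x
    have hb1 : -(u x * h x) ≤ |u x| * |h x| := by
      rw [← abs_mul]
      exact neg_le_abs _
    have hb2 : |u x| * |h x| ≤ |u x| * ‖iteratedFDeriv ℝ 2 u x‖ :=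
      mul_le_mul_of_nonneg_left (hhb x) (abs_nonneg _)
    have hgx : (0:ℝ) ≤ g x ^ 2 := sq_nonneg _
    calc -(u x * (3 * g x ^ 2 * h x)) = 3 * g x ^ 2 * (-(u x * h x)) := by ring
      _ ≤ 3 * g x ^ 2 * (|u x| * ‖iteratedFDeriv ℝ 2 u x‖) := by
          apply mul_le_mul_of_nonneg_left (hb1.trans hb2) (by positivity)
      _ = 3 * (|u x| * ‖iteratedFDeriv ℝ 2 u x‖ * g x ^ 2) := by ring
  -- ∫ g⁴ ≤ ∫ ‖fderiv u‖⁴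
  have hnorm4_int : Integrable (fun x : X => ‖fderiv ℝ u x‖ ^ 4) volume := by
    apply ((hu.continuous_fderiv (by simp)).norm.pow 4).integrable_of_hasCompactSupport
    exact (hsupp.fderiv ℝ).mono' fun x hx => subset_closure (by
      simp only [Function.mem_support] at hx ⊢
      exact fun hh0 => hx (by simp [hh0]))
  have hg4_int : Integrable (fun x : X => g x ^ 4) volume :=
    (hg_cont.pow 4).integrable_of_hasCompactSupport
      (hg_supp.mono' fun x hx => subset_closure (by
        simp only [Function.mem_support] at hx ⊢
        exact fun hh0 => hx (by simp [hh0])))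
  have hg4_le : ∫ x : X, g x ^ 4 ≤ ∫ x : X, ‖fderiv ℝ u x‖ ^ 4 := by
    apply integral_mono hg4_int hnorm4_int
    intro x
    have h1 : |g x| ≤ ‖fderiv ℝ u x‖ := by
      rw [hgdef]
      calc |fderiv ℝ u x v| = ‖fderiv ℝ u x v‖ := (Real.norm_eq_abs _).symm
        _ ≤ ‖fderiv ℝ u x‖ * ‖v‖ := (fderiv ℝ u x).le_opNorm v
        _ ≤ ‖fderiv ℝ u x‖ * 1 := by
            apply mul_le_mul_of_nonneg_left hv (norm_nonneg _)
        _ = ‖fderiv ℝ u x‖ := mul_one _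
    calc g x ^ 4 = |g x| ^ 4 := by
          rw [← abs_of_nonneg (a := g x ^ 4) (by positivity), abs_pow]
      _ ≤ ‖fderiv ℝ u x‖ ^ 4 := pow_le_pow_left₀ (abs_nonneg _) h1 4
  -- conclude
  have hg2 : (0:ℝ) ≤ ∫ x : X, g x ^ 4 := integral_nonneg fun x => by positivity
  have hrpow_le : (∫ x : X, g x ^ 4) ^ ((1:ℝ)/2) ≤ (∫ x : X, ‖fderiv ℝ u x‖ ^ 4) ^ ((1:ℝ)/2) :=
    Real.rpow_le_rpow hg2 hg4_le (by norm_num)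
  have hH := holder_step hu hsupp hg_cont hg_supp
  show (∫ x : X, g x ^ 4) ≤
      3 * ((∫ x : X, (‖x.1‖ ^ ((1:ℝ)/4) * ‖iteratedFDeriv ℝ 2 u x‖) ^ 4) ^ ((1:ℝ)/4) *
        (∫ x : X, (‖x.1‖ ^ (-(1:ℝ)/4) * |u x|) ^ 4) ^ ((1:ℝ)/4) *
        (∫ x : X, ‖fderiv ℝ u x‖ ^ 4) ^ ((1:ℝ)/2))
  have hAB : (0:ℝ) ≤ (∫ x : X, (‖x.1‖ ^ ((1:ℝ)/4) * ‖iteratedFDeriv ℝ 2 u x‖) ^ 4) ^ ((1:ℝ)/4) *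
      (∫ x : X, (‖x.1‖ ^ (-(1:ℝ)/4) * |u x|) ^ 4) ^ ((1:ℝ)/4) := by
    apply mul_nonneg <;>
      exact Real.rpow_nonneg (integral_nonneg fun x => by positivity) _
  calc ∫ x : X, g x ^ 4
      ≤ 3 * ∫ x : X, |u x| * ‖iteratedFDeriv ℝ 2 u x‖ * g x ^ 2 := e2
    _ ≤ 3 * ((∫ x : X, (‖x.1‖ ^ ((1:ℝ)/4) * ‖iteratedFDeriv ℝ 2 u x‖) ^ 4) ^ ((1:ℝ)/4) *
        (∫ x : X, (‖x.1‖ ^ (-(1:ℝ)/4) * |u x|) ^ 4) ^ ((1:ℝ)/4) *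
        (∫ x : X, g x ^ 4) ^ ((1:ℝ)/2)) := by
        apply mul_le_mul_of_nonneg_left hH (by norm_num)
    _ ≤ 3 * ((∫ x : X, (‖x.1‖ ^ ((1:ℝ)/4) * ‖iteratedFDeriv ℝ 2 u x‖) ^ 4) ^ ((1:ℝ)/4) *
        (∫ x : X, (‖x.1‖ ^ (-(1:ℝ)/4) * |u x|) ^ 4) ^ ((1:ℝ)/4) *
        (∫ x : X, ‖fderiv ℝ u x‖ ^ 4) ^ ((1:ℝ)/2)) := by
        apply mul_le_mul_of_nonneg_left _ (by norm_num)
        exact mul_le_mul_of_nonneg_left hrpow_le hAB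

end WGN

end

open WGN in
/-- Weighted Gagliardo–Nirenberg interpolation on ℝ⁴ = ℝ³ × ℝ:
‖∇u‖²_{L⁴} ≲ ‖|x'|^{1/4} D²u‖_{L⁴} ‖|x'|^{-1/4} u‖_{L⁴}. -/
theorem weighted_GN_interpolation :
    ∃ C > 0, ∀ u : (EuclideanSpace ℝ (Fin 3) × ℝ) → ℝ,
      ContDiff ℝ (⊤ : ℕ∞) u → HasCompactSupport u →
      ((∫ x : EuclideanSpace ℝ (Fin 3) × ℝ, ‖fderiv ℝ u x‖ ^ 4) ^ ((1:ℝ)/4)) ^ 2 ≤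
        C * (∫ x : EuclideanSpace ℝ (Fin 3) × ℝ,
              (‖x.1‖ ^ ((1:ℝ)/4) * ‖iteratedFDeriv ℝ 2 u x‖) ^ 4) ^ ((1:ℝ)/4) *
          (∫ x : EuclideanSpace ℝ (Fin 3) × ℝ,
              (‖x.1‖ ^ (-(1:ℝ)/4) * |u x|) ^ 4) ^ ((1:ℝ)/4) := by
  refine ⟨768, by norm_num, fun u hu hsupp => ?_⟩
  have hI0 : (0:ℝ) ≤ ∫ x : X, ‖fderiv ℝ u x‖ ^ 4 := integral_nonneg fun x => by positivity
  have hA40 : (0:ℝ) ≤ (∫ x : X, (‖x.1‖ ^ ((1:ℝ)/4) * ‖iteratedFDeriv ℝ 2 u x‖) ^ 4) ^ ((1:ℝ)/4) :=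
    Real.rpow_nonneg (integral_nonneg fun x => by positivity) _
  have hB40 : (0:ℝ) ≤ (∫ x : X, (‖x.1‖ ^ (-(1:ℝ)/4) * |u x|) ^ 4) ^ ((1:ℝ)/4) :=
    Real.rpow_nonneg (integral_nonneg fun x => by positivity) _
  -- derivative functions
  have hfd_cd : ContDiff ℝ (⊤ : ℕ∞) (fderiv ℝ u) := hu.fderiv_right (by simp)
  have hgc : ∀ v : X, Continuous fun x : X => fderiv ℝ u x v := fun v =>
    (hfd_cd.clm_apply contDiff_const).continuous
  have hgs : ∀ v : X, HasCompactSupport fun x : X => fderiv ℝ u x v := fun v =>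
    hsupp.fderiv_apply ℝ v
  have hgint : ∀ v : X, Integrable (fun x : X => (fderiv ℝ u x v) ^ 4) volume := fun v =>
    ((hgc v).pow 4).integrable_of_hasCompactSupport
      ((hgs v).mono' fun x hx => subset_closure (by
        simp only [Function.mem_support] at hx ⊢
        exact fun hh0 => hx (by simp [hh0])))
  have hnorm4_int : Integrable (fun x : X => ‖fderiv ℝ u x‖ ^ 4) volume := by
    apply ((hu.continuous_fderiv (by simp)).norm.pow 4).integrable_of_hasCompactSupport
    exact (hsupp.fderiv ℝ).mono' fun x hx => subset_closure (by
      simp only [Function.mem_support] at hx ⊢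
      exact fun hh0 => hx (by simp [hh0]))
  -- pointwise fourth-power bound
  have habs4 : ∀ y : ℝ, |y| ^ 4 = y ^ 4 := fun y => by
    rw [← abs_pow]
    exact abs_of_nonneg (by positivity)
  have hpt : ∀ x : X, ‖fderiv ℝ u x‖ ^ 4 ≤
      64 * ((fderiv ℝ u x v0) ^ 4 + (fderiv ℝ u x v1) ^ 4 + (fderiv ℝ u x v2) ^ 4 +
        (fderiv ℝ u x v3) ^ 4) := by
    intro x
    have hb := opnorm_le_sum (fderiv ℝ u x)
    have h4 : ‖fderiv ℝ u x‖ ^ 4 ≤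
        (|fderiv ℝ u x v0| + |fderiv ℝ u x v1| + |fderiv ℝ u x v2| + |fderiv ℝ u x v3|) ^ 4 :=
      pow_le_pow_left₀ (norm_nonneg _) hb 4
    refine h4.trans ?_
    have h64 := pow4_sum_le |fderiv ℝ u x v0| |fderiv ℝ u x v1| |fderiv ℝ u x v2|
      |fderiv ℝ u x v3|
    rw [habs4, habs4, habs4, habs4] at h64
    exact h64
  -- sum of the four directional integrals
  have i01 : Integrable (fun x : X => (fderiv ℝ u x v0) ^ 4 + (fderiv ℝ u x v1) ^ 4)
      volume := (hgint v0).add (hgint v1)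
  have i012 : Integrable (fun x : X => (fderiv ℝ u x v0) ^ 4 + (fderiv ℝ u x v1) ^ 4 +
      (fderiv ℝ u x v2) ^ 4) volume := i01.add (hgint v2)
  have i0123 : Integrable (fun x : X => (fderiv ℝ u x v0) ^ 4 + (fderiv ℝ u x v1) ^ 4 +
      (fderiv ℝ u x v2) ^ 4 + (fderiv ℝ u x v3) ^ 4) volume := i012.add (hgint v3)
  have hsum_int : Integrable (fun x : X =>
      64 * ((fderiv ℝ u x v0) ^ 4 + (fderiv ℝ u x v1) ^ 4 + (fderiv ℝ u x v2) ^ 4 +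
        (fderiv ℝ u x v3) ^ 4)) volume := i0123.const_mul 64
  have hIle : ∫ x : X, ‖fderiv ℝ u x‖ ^ 4 ≤
      64 * ((∫ x : X, (fderiv ℝ u x v0) ^ 4) + (∫ x : X, (fderiv ℝ u x v1) ^ 4) +
        (∫ x : X, (fderiv ℝ u x v2) ^ 4) + (∫ x : X, (fderiv ℝ u x v3) ^ 4)) := by
    calc ∫ x : X, ‖fderiv ℝ u x‖ ^ 4
        ≤ ∫ x : X, 64 * ((fderiv ℝ u x v0) ^ 4 + (fderiv ℝ u x v1) ^ 4 +
            (fderiv ℝ u x v2) ^ 4 + (fderiv ℝ u x v3) ^ 4) :=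
          integral_mono hnorm4_int hsum_int hpt
      _ = 64 * ((∫ x : X, (fderiv ℝ u x v0) ^ 4) + (∫ x : X, (fderiv ℝ u x v1) ^ 4) +
          (∫ x : X, (fderiv ℝ u x v2) ^ 4) + (∫ x : X, (fderiv ℝ u x v3) ^ 4)) := by
          rw [integral_const_mul,
            integral_add i012 (hgint v3),
            integral_add i01 (hgint v2),
            integral_add (hgint v0) (hgint v1)]
  -- apply key_direction in each direction
  have k0 := key_direction hu hsupp norm_v0
  have k1 := key_direction hu hsupp norm_v1
  have k2 := key_direction hu hsupp norm_v2
  have k3 := key_direction hu hsupp norm_v3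
  have hI_le : ∫ x : X, ‖fderiv ℝ u x‖ ^ 4 ≤
      768 * ((∫ x : X, (‖x.1‖ ^ ((1:ℝ)/4) * ‖iteratedFDeriv ℝ 2 u x‖) ^ 4) ^ ((1:ℝ)/4) *
        (∫ x : X, (‖x.1‖ ^ (-(1:ℝ)/4) * |u x|) ^ 4) ^ ((1:ℝ)/4) *
        (∫ x : X, ‖fderiv ℝ u x‖ ^ 4) ^ ((1:ℝ)/2)) := by
    refine hIle.trans ?_
    have hsum := add_le_add (add_le_add (add_le_add k0 k1) k2) k3
    calc 64 * ((∫ x : X, (fderiv ℝ u x v0) ^ 4) + (∫ x : X, (fderiv ℝ u x v1) ^ 4) +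
          (∫ x : X, (fderiv ℝ u x v2) ^ 4) + (∫ x : X, (fderiv ℝ u x v3) ^ 4))
        ≤ 64 * (3 * ((∫ x : X, (‖x.1‖ ^ ((1:ℝ)/4) * ‖iteratedFDeriv ℝ 2 u x‖) ^ 4) ^ ((1:ℝ)/4) *
            (∫ x : X, (‖x.1‖ ^ (-(1:ℝ)/4) * |u x|) ^ 4) ^ ((1:ℝ)/4) *
            (∫ x : X, ‖fderiv ℝ u x‖ ^ 4) ^ ((1:ℝ)/2)) * 4) := by
          apply mul_le_mul_of_nonneg_left _ (by norm_num : (0:ℝ) ≤ 64)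
          calc _ ≤ _ := hsum
            _ = _ := by ring
      _ = _ := by ring
  -- wrap up
  show ((∫ x : X, ‖fderiv ℝ u x‖ ^ 4) ^ ((1:ℝ)/4)) ^ 2 ≤
      768 * (∫ x : X, (‖x.1‖ ^ ((1:ℝ)/4) * ‖iteratedFDeriv ℝ 2 u x‖) ^ 4) ^ ((1:ℝ)/4) *
      (∫ x : X, (‖x.1‖ ^ (-(1:ℝ)/4) * |u x|) ^ 4) ^ ((1:ℝ)/4)
  have hhalf : ((∫ x : X, ‖fderiv ℝ u x‖ ^ 4) ^ ((1:ℝ)/4)) ^ 2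
      = (∫ x : X, ‖fderiv ℝ u x‖ ^ 4) ^ ((1:ℝ)/2) := by
    rw [← Real.rpow_natCast ((∫ x : X, ‖fderiv ℝ u x‖ ^ 4) ^ ((1:ℝ)/4)) 2,
      ← Real.rpow_mul hI0]
    norm_num
  rw [hhalf]
  rcases eq_or_lt_of_le hI0 with h0 | hpos
  · rw [← h0, Real.zero_rpow (by norm_num : (1:ℝ)/2 ≠ 0)]
    positivity
  · have hI2pos : (0:ℝ) < (∫ x : X, ‖fderiv ℝ u x‖ ^ 4) ^ ((1:ℝ)/2) :=
      Real.rpow_pos_of_pos hpos _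
    have hmul : (∫ x : X, ‖fderiv ℝ u x‖ ^ 4) ^ ((1:ℝ)/2) *
        (∫ x : X, ‖fderiv ℝ u x‖ ^ 4) ^ ((1:ℝ)/2) = ∫ x : X, ‖fderiv ℝ u x‖ ^ 4 := by
      rw [← Real.rpow_add hpos]
      norm_num
    have hstep : (∫ x : X, ‖fderiv ℝ u x‖ ^ 4) ^ ((1:ℝ)/2) *
        (∫ x : X, ‖fderiv ℝ u x‖ ^ 4) ^ ((1:ℝ)/2) ≤
        (768 * (∫ x : X, (‖x.1‖ ^ ((1:ℝ)/4) * ‖iteratedFDeriv ℝ 2 u x‖) ^ 4) ^ ((1:ℝ)/4) *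
          (∫ x : X, (‖x.1‖ ^ (-(1:ℝ)/4) * |u x|) ^ 4) ^ ((1:ℝ)/4)) *
        (∫ x : X, ‖fderiv ℝ u x‖ ^ 4) ^ ((1:ℝ)/2) := by
      rw [hmul]
      refine hI_le.trans (le_of_eq ?_)
      ring
    exact le_of_mul_le_mul_right hstep hI2pos
end

section
/- Let C > 1 and E, Z, ε > 0. Then the sum ∑_{k=1}^{K} ε / log(3 + E + C^{2k} Z²) is bounded below by c·ε·log(1 + K / log(3 + E + Z²)) / log C for some universal constant c > 0 (for K sufficiently large). -/
open Real Finset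

/-!
Since `3 + E + C^(2k) Z² ≤ C^(2k) (3 + E + Z²)`, the `k`-th denominator is at most
`2 log C · (k + b)` with `b = L / (2 log C)`, `L = log (3 + E + Z²)`. Comparing the resulting
harmonic-type sum with an integral gives `∑ 1/(k + b) ≥ log (K + 1 + b) - log (1 + b)`, and once
`K + 1 ≥ (1 + b)²` this is at least `½ log (K + 1) ≥ ½ log (1 + K / L)` (as `L ≥ 1`).
-/

namespace Real

lemma log_add_one_sub_log_le_inv {x : ℝ} (hx : 0 < x) : log (x + 1) - log x ≤ x⁻¹ := by
  rw [← log_div (by positivity) hx.ne']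
  calc log ((x + 1) / x) ≤ (x + 1) / x - 1 := log_le_sub_one_of_pos (by positivity)
    _ = x⁻¹ := by field_simp; ring

lemma log_sub_log_le_sum_Icc_inv {b : ℝ} (hb : -1 < b) (K : ℕ) :
    log (K + 1 + b) - log (1 + b) ≤ ∑ k ∈ Icc 1 K, ((k : ℝ) + b)⁻¹ := by
  induction K with
  | zero => simp
  | succ K ih =>
    have step := log_add_one_sub_log_le_inv (x := K + 1 + b) (by linarith [K.cast_nonneg (α := ℝ)])
    rw [sum_Icc_succ_top (by omega), Nat.cast_succ, add_right_comm _ (1 : ℝ) b]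
    linarith

lemma log_le_two_mul_log_add_sub_log {y b : ℝ} (hb : 0 ≤ b) (hy : (1 + b) ^ 2 ≤ y) :
    log y ≤ 2 * (log (y + b) - log (1 + b)) := by
  have hy₀ : 0 < y := by nlinarith
  have key : y * (1 + b) ^ 2 ≤ (y + b) ^ 2 := by nlinarith
  rw [← log_div (by positivity) (by positivity), ← Nat.cast_ofNat, ← log_pow]
  exact log_le_log hy₀ (by rw [div_pow, le_div_iff₀ (by positivity)]; exact key)

lemma log_add_mul_le {A B t : ℝ} (hA : 0 < A) (hB : 0 ≤ B) (ht : 1 ≤ t) :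
    log (A + t * B) ≤ log t + log (A + B) := by
  rw [← log_mul (by positivity) (by positivity)]
  exact log_le_log (by positivity) (by nlinarith)

end Real

/-- Lower bound for the sum of reciprocals of logarithms along a geometric
progression, for K sufficiently large. -/
theorem sum_reciprocal_log_lower_bound :
    ∃ c > 0, ∀ C E Z ε : ℝ, 1 < C → 0 < E → 0 < Z → 0 < ε →
      ∃ K₀ : ℕ, ∀ K : ℕ, K₀ ≤ K →
        c * ε * Real.log (1 + (K : ℝ) / Real.log (3 + E + Z ^ 2)) / Real.log C ≤
          ∑ k ∈ Finset.Icc 1 K, ε / Real.log (3 + E + C ^ (2 * k) * Z ^ 2) := by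
  refine ⟨1 / 4, by norm_num, fun C E Z ε hC hE hZ hε => ?_⟩
  set L := log (3 + E + Z ^ 2)
  have hL : 1 ≤ L := by
    rw [le_log_iff_exp_le (by positivity)]
    nlinarith [exp_one_lt_three]
  have hlogC : 0 < log C := log_pos hC
  set b := L / (2 * log C)
  have hb : 0 ≤ b := by positivity
  refine ⟨⌈(1 + b) ^ 2⌉₊, fun K hK => ?_⟩
  have hKb : (1 + b) ^ 2 ≤ K + 1 := by linarith [(Nat.ceil_le.mp hK : (1 + b) ^ 2 ≤ K)]
  have hterm (k : ℕ) : log (3 + E + C ^ (2 * k) * Z ^ 2) ≤ 2 * log C * k + L := by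
    have h := log_add_mul_le (A := 3 + E) (B := Z ^ 2) (by positivity) (by positivity)
      (one_le_pow₀ (n := 2 * k) hC.le)
    rw [log_pow] at h
    push_cast at h
    linarith
  calc 1 / 4 * ε * log (1 + K / L) / log C
      ≤ ε / (2 * log C) * (log (K + 1 + b) - log (1 + b)) := by
        have h1 : log (1 + K / L) ≤ log (K + 1) :=
          log_le_log (by positivity) (by rw [add_comm]; gcongr; exact div_le_self K.cast_nonneg hL)
        have h2 := log_le_two_mul_log_add_sub_log hb hKb
        calc 1 / 4 * ε * log (1 + K / L) / log C
            ≤ 1 / 4 * ε * (2 * (log (K + 1 + b) - log (1 + b))) / log C := by gcongr; linarith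
          _ = _ := by field_simp; ring
    _ ≤ ε / (2 * log C) * ∑ k ∈ Icc 1 K, ((k : ℝ) + b)⁻¹ := by
        gcongr; exact log_sub_log_le_sum_Icc_inv (by linarith) K
    _ = ∑ k ∈ Icc 1 K, ε / (2 * log C * k + L) := by
        rw [mul_sum]
        refine sum_congr rfl fun k _ => ?_
        simp only [b]
        field_simp
    _ ≤ ∑ k ∈ Icc 1 K, ε / log (3 + E + C ^ (2 * k) * Z ^ 2) := by
        refine sum_le_sum fun k _ => div_le_div_of_nonneg_left hε.le ?_ (hterm k)
        exact log_pos (by nlinarith [one_le_pow₀ (n := 2 * k) hC.le])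
end
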